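/- Let f : ℝⁿ → ℝⁿ be C¹ and globally Lipschitz with constant L > 0. Then for any non-constant periodic solution x(t) of x' = f(x) with period T > 0, one has T ≥ 2π/L. -/

import Mathlib

/-!
Along the periodic orbit the velocity `y = f ∘ x` is `T`-periodic with mean zero (it integrates to
`x T - x 0 = 0`), and `‖y'‖ = ‖Df(x) y‖ ≤ L ‖y‖`. Wirtinger's inequality
`∫ ‖y‖² ≤ (T / 2π)² ∫ ‖y'‖²`, which follows from Parseval's identity because integrating by parts
divides the `n`-th Fourier coefficient of `y'` by `2πin / T`, then gives
`∫ ‖y‖² ≤ (LT / 2π)² ∫ ‖y‖²`; and `∫ ‖y‖² > 0` because `x` is not constant.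
-/

open scoped Real ENNReal
open MeasureTheory Set Function

theorem ContinuousOn.memLp_restrict_Ioc {E : Type*} [NormedAddCommGroup E] {f : ℝ → E} {a b : ℝ}
    (hf : ContinuousOn f (Icc a b)) (p : ℝ≥0∞) : MemLp f p (volume.restrict (Ioc a b)) := by
  obtain ⟨C, hC⟩ := isCompact_Icc.exists_bound_of_continuousOn hf
  have hIcc : MemLp f p (volume.restrict (Icc a b)) :=
    .of_bound (hf.aestronglyMeasurable measurableSet_Icc) C
      (ae_restrict_of_forall_mem measurableSet_Icc hC)
  exact hIcc.mono_measure (Measure.restrict_mono Ioc_subset_Icc_self le_rfl)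

theorem norm_fourierCoeffOn_le_of_hasDerivAt {a b : ℝ} (hab : a < b) {g g' : ℝ → ℂ}
    (hg : ∀ t ∈ Icc a b, HasDerivAt g (g' t) t) (hg' : IntervalIntegrable g' volume a b)
    (hgab : g a = g b) (hmean : ∫ t in a..b, g t = 0) (n : ℤ) :
    ‖fourierCoeffOn hab g n‖ ≤ (b - a) / (2 * π) * ‖fourierCoeffOn hab g' n‖ := by
  rcases eq_or_ne n 0 with rfl | hn
  · simp only [fourierCoeffOn_eq_integral, neg_zero, fourier_zero, one_smul, hmean, smul_zero,
      norm_zero]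
    positivity
  -- integration by parts; the boundary term vanishes because `g a = g b`
  rw [fourierCoeffOn_of_hasDerivAt hab hn (by rwa [uIcc_of_le hab.le]) hg', hgab, sub_self,
    mul_zero, zero_sub, norm_mul, norm_neg, norm_mul, ← Complex.ofReal_sub, Complex.norm_real,
    Real.norm_of_nonneg (sub_nonneg.2 hab.le)]
  have hn1 : (1 : ℝ) ≤ |(n : ℝ)| := by exact_mod_cast Int.one_le_abs hn
  have hnorm : ‖(1 : ℂ) / (-2 * π * Complex.I * n)‖ = 1 / (2 * π * |(n : ℝ)|) := by
    simp [abs_of_pos Real.pi_pos]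
  rw [hnorm]
  calc 1 / (2 * π * |(n : ℝ)|) * ((b - a) * ‖fourierCoeffOn hab g' n‖)
      = (b - a) / (2 * π * |(n : ℝ)|) * ‖fourierCoeffOn hab g' n‖ := by ring
    _ ≤ (b - a) / (2 * π) * ‖fourierCoeffOn hab g' n‖ := by
      gcongr ?_ * _
      exact div_le_div_of_nonneg_left (sub_nonneg.2 hab.le) (by positivity)
        (le_mul_of_one_le_right (by positivity) hn1)

theorem wirtinger_inequality {a b : ℝ} (hab : a < b) {g g' : ℝ → ℂ}
    (hg : ∀ t ∈ Icc a b, HasDerivAt g (g' t) t) (hg' : ContinuousOn g' (Icc a b))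
    (hgab : g a = g b) (hmean : ∫ t in a..b, g t = 0) :
    ∫ t in a..b, ‖g t‖ ^ 2 ≤ ((b - a) / (2 * π)) ^ 2 * ∫ t in a..b, ‖g' t‖ ^ 2 := by
  have hg_cont : ContinuousOn g (Icc a b) := fun t ht => (hg t ht).continuousAt.continuousWithinAt
  have hparseval := hasSum_sq_fourierCoeffOn hab (hg_cont.memLp_restrict_Ioc 2)
  have hparseval' := hasSum_sq_fourierCoeffOn hab (hg'.memLp_restrict_Ioc 2)
  have hcoeff (n : ℤ) : ‖fourierCoeffOn hab g n‖ ^ 2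
      ≤ ((b - a) / (2 * π)) ^ 2 * ‖fourierCoeffOn hab g' n‖ ^ 2 := by
    rw [← mul_pow]
    gcongr
    exact norm_fourierCoeffOn_le_of_hasDerivAt hab hg
      (hg'.intervalIntegrable_of_Icc hab.le) hgab hmean n
  have hle := hasSum_le hcoeff hparseval (hparseval'.mul_left _)
  rw [smul_eq_mul, smul_eq_mul, mul_left_comm] at hle
  exact le_of_mul_le_mul_left hle (inv_pos.2 (sub_pos.2 hab))

theorem EuclideanSpace.wirtinger_inequality {ι : Type*} [Fintype ι] {a b : ℝ} (hab : a < b)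
    {g g' : ℝ → EuclideanSpace ℝ ι}
    (hg : ∀ t ∈ Icc a b, HasDerivAt g (g' t) t) (hg' : ContinuousOn g' (Icc a b))
    (hgab : g a = g b) (hmean : ∫ t in a..b, g t = 0) :
    ∫ t in a..b, ‖g t‖ ^ 2 ≤ ((b - a) / (2 * π)) ^ 2 * ∫ t in a..b, ‖g' t‖ ^ 2 := by
  let coord (i : ι) : EuclideanSpace ℝ ι →L[ℝ] ℂ := Complex.ofRealCLM.comp (EuclideanSpace.proj i)
  have hnorm_coord (i : ι) (v : EuclideanSpace ℝ ι) : ‖coord i v‖ = ‖v i‖ := Complex.norm_real _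
  have hg_cont : ContinuousOn g (Icc a b) := fun t ht => (hg t ht).continuousAt.continuousWithinAt
  have hsum {h : ℝ → EuclideanSpace ℝ ι} (hh : ContinuousOn h (Icc a b)) :
      ∫ t in a..b, ‖h t‖ ^ 2 = ∑ i, ∫ t in a..b, ‖coord i (h t)‖ ^ 2 := by
    simp only [hnorm_coord, EuclideanSpace.norm_sq_eq]
    exact intervalIntegral.integral_finsetSum fun i _ =>
      (((EuclideanSpace.proj i).continuous.comp_continuousOn hh).norm.pow 2
        ).intervalIntegrable_of_Icc hab.le
  rw [hsum hg_cont, hsum hg', Finset.mul_sum]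
  refine Finset.sum_le_sum fun i _ => _root_.wirtinger_inequality hab
    (fun t ht => (coord i).hasFDerivAt.comp_hasDerivAt t (hg t ht))
    ((coord i).continuous.comp_continuousOn hg') (congrArg (coord i) hgab) ?_
  rw [(coord i).intervalIntegral_comp_comm (hg_cont.intervalIntegrable_of_Icc hab.le), hmean,
    map_zero]

theorem Function.Periodic.intervalIntegral_pos {h : ℝ → ℝ} {T : ℝ} (hper : Periodic h T)
    (hT : 0 < T) (hc : Continuous h) (hnonneg : ∀ t, 0 ≤ h t) {t₀ : ℝ} (ht₀ : h t₀ ≠ 0) :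
    0 < ∫ t in 0..T, h t := by
  rw [← zero_add T, hper.intervalIntegral_add_eq 0 (t₀ - T / 2),
    intervalIntegral.integral_pos_iff_support_of_nonneg_ae (.of_forall hnonneg)
      (hc.intervalIntegrable _ _)]
  refine ⟨by linarith, ?_⟩
  have hopen : IsOpen (support h ∩ Ioo (t₀ - T / 2) (t₀ - T / 2 + T)) :=
    hc.isOpen_support.inter isOpen_Ioo
  have hmem : t₀ ∈ support h ∩ Ioo (t₀ - T / 2) (t₀ - T / 2 + T) :=
    ⟨ht₀, by linarith, by linarith⟩
  exact (hopen.measure_pos volume ⟨t₀, hmem⟩).trans_le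
    (measure_mono (inter_subset_inter_right _ Ioo_subset_Ioc_self))

theorem Function.Periodic.two_pi_le_mul_of_norm_deriv_le {ι : Type*} [Fintype ι]
    {g g' : ℝ → EuclideanSpace ℝ ι} {T L : ℝ} (hper : Periodic g T) (hT : 0 < T) (hL : 0 ≤ L)
    (hg : ∀ t, HasDerivAt g (g' t) t) (hg' : Continuous g') (hmean : ∫ t in 0..T, g t = 0)
    (hbound : ∀ t, ‖g' t‖ ≤ L * ‖g t‖) (hne : ∃ t, g t ≠ 0) :
    2 * π ≤ L * T := by
  have hg_cont : Continuous g := continuous_iff_continuousAt.2 fun t => (hg t).continuousAt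
  set A := ∫ t in 0..T, ‖g t‖ ^ 2
  obtain ⟨t₀, ht₀⟩ := hne
  have hA : 0 < A := (hper.comp (‖·‖ ^ 2)).intervalIntegral_pos hT (hg_cont.norm.pow 2)
    (fun t => sq_nonneg ‖g t‖) (pow_ne_zero 2 (norm_ne_zero_iff.2 ht₀))
  have hderiv : ∫ t in 0..T, ‖g' t‖ ^ 2 ≤ L ^ 2 * A := by
    rw [← intervalIntegral.integral_const_mul]
    refine intervalIntegral.integral_mono_on hT.le ((hg'.norm.pow 2).intervalIntegrable _ _)
      ((continuous_const.mul (hg_cont.norm.pow 2)).intervalIntegrable _ _) fun t _ => ?_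
    rw [← mul_pow]
    exact pow_le_pow_left₀ (norm_nonneg _) (hbound t) 2
  have hwirt : A ≤ (T / (2 * π)) ^ 2 * ∫ t in 0..T, ‖g' t‖ ^ 2 := by
    simpa only [sub_zero] using EuclideanSpace.wirtinger_inequality hT (fun t _ => hg t)
      hg'.continuousOn (by simpa using (hper 0).symm) hmean
  have hsq : A * (2 * π) ^ 2 ≤ A * (L * T) ^ 2 :=
    calc A * (2 * π) ^ 2 ≤ (T / (2 * π)) ^ 2 * (L ^ 2 * A) * (2 * π) ^ 2 := by
          gcongr
          exact hwirt.trans (by gcongr)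
      _ = A * (L * T) ^ 2 := by field_simp
  exact (pow_le_pow_iff_left₀ (by positivity) (by positivity) two_ne_zero).1
    (le_of_mul_le_mul_left hsq hA)

/-- Yorke's theorem: if `f : ℝⁿ → ℝⁿ` is `C¹` and globally Lipschitz with constant `L > 0`,
then every non-constant periodic solution of `x' = f(x)` with period `T > 0` satisfies
`T ≥ 2π/L`. -/
theorem yorke_period_bound {n : ℕ}
    (f : EuclideanSpace ℝ (Fin n) → EuclideanSpace ℝ (Fin n))
    (hf : ContDiff ℝ 1 f)
    (L : ℝ) (hL : 0 < L)
    (hlip : ∀ x y, ‖f x - f y‖ ≤ L * ‖x - y‖)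
    (x : ℝ → EuclideanSpace ℝ (Fin n))
    (hsol : ∀ t, HasDerivAt x (f (x t)) t)
    (T : ℝ) (hT : 0 < T) (hper : ∀ t, x (t + T) = x t)
    (hnonconst : ∃ t s, x t ≠ x s) :
    2 * π / L ≤ T := by
  have hx_cont : Continuous x := continuous_iff_continuousAt.2 fun t => (hsol t).continuousAt
  have hfderiv (z : EuclideanSpace ℝ (Fin n)) : ‖fderiv ℝ f z‖ ≤ L := by
    simpa [hL.le] using norm_fderiv_le_of_lipschitz ℝ (x₀ := z)
      (LipschitzWith.of_dist_le' (K := L) fun a b => by simpa only [dist_eq_norm] using hlip a b)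
  have hacc (t : ℝ) : HasDerivAt (f ∘ x) (fderiv ℝ f (x t) (f (x t))) t :=
    (hf.differentiable one_ne_zero (x t)).hasFDerivAt.comp_hasDerivAt t (hsol t)
  have hmean : ∫ t in 0..T, f (x t) = 0 := by
    rw [intervalIntegral.integral_eq_sub_of_hasDerivAt (fun t _ => hsol t)
      ((hf.continuous.comp hx_cont).intervalIntegrable 0 T), ← hper 0, zero_add, sub_self]
  have hmoving : ∃ t, f (x t) ≠ 0 := by
    obtain ⟨t, s, hts⟩ := hnonconst
    by_contra! hrest
    exact hts (is_const_of_deriv_eq_zero (fun u => (hsol u).differentiableAt)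
      (fun u => by rw [(hsol u).deriv, hrest u]) t s)
  have hbound (t : ℝ) : ‖fderiv ℝ f (x t) (f (x t))‖ ≤ L * ‖f (x t)‖ :=
    ((fderiv ℝ f (x t)).le_opNorm _).trans (mul_le_mul_of_nonneg_right (hfderiv _) (norm_nonneg _))
  have hacc_cont : Continuous fun t => fderiv ℝ f (x t) (f (x t)) :=
    ((hf.continuous_fderiv one_ne_zero).comp hx_cont).clm_apply (hf.continuous.comp hx_cont)
  rw [div_le_iff₀' hL]
  exact Periodic.two_pi_le_mul_of_norm_deriv_le (fun t => congrArg f (hper t)) hT hL.le hacc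
    hacc_cont hmean hbound hmoving
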